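/- For every W ∈ ℝ^d one has ‖T^λ W − W‖_μ ≤ 2 ‖W − V*‖_μ, where V* := Σ_{t=0}^∞ γ^t P^t r̄ is the fixed point of T^λ. -/

import Mathlib

open scoped BigOperators

/-- The μ-weighted inner product on ℝ^d. -/
noncomputable def muInner {d : ℕ} (μ a b : Fin d → ℝ) : ℝ := ∑ i, μ i * a i * b i

/-- The μ-weighted norm on ℝ^d. -/
noncomputable def muNorm {d : ℕ} (μ a : Fin d → ℝ) : ℝ := Real.sqrt (muInner μ a a)

section helpers
variable {d : ℕ}

/-- the embedding into Euclidean space realizing muNorm as a norm -/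
noncomputable def muEmb (μ : Fin d → ℝ) : (Fin d → ℝ) →ₗ[ℝ] EuclideanSpace ℝ (Fin d) where
  toFun a := (WithLp.equiv 2 (Fin d → ℝ)).symm (fun i => Real.sqrt (μ i) * a i)
  map_add' a b := by
    ext i
    simp [mul_add]
  map_smul' c a := by
    ext i
    simp; ring

lemma muEmb_apply (μ : Fin d → ℝ) (a : Fin d → ℝ) (i : Fin d) :
    muEmb μ a i = Real.sqrt (μ i) * a i := rfl

lemma muNorm_eq (μ : Fin d → ℝ) (hμ : ∀ i, 0 ≤ μ i) (a : Fin d → ℝ) :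
    muNorm μ a = ‖muEmb μ a‖ := by
  rw [EuclideanSpace.norm_eq, muNorm, muInner]
  congr 1
  refine Finset.sum_congr rfl fun i _ => ?_
  rw [muEmb_apply, Real.norm_eq_abs, sq_abs, mul_pow, Real.sq_sqrt (hμ i)]
  ring

end helpers

section stoch
variable {d : ℕ} (P : Matrix (Fin d) (Fin d) ℝ)

lemma pow_entry_nonneg (h : ∀ i j, 0 ≤ P i j) (n : ℕ) : ∀ i j, 0 ≤ (P ^ n) i j := by
  induction n with
  | zero => intro i j; simp [Matrix.one_apply]; positivity
  | succ n ih =>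
    intro i j
    rw [pow_succ, Matrix.mul_apply]
    exact Finset.sum_nonneg fun k _ => mul_nonneg (ih i k) (h k j)

lemma pow_row_sum (h1 : ∀ i, ∑ j, P i j = 1) (n : ℕ) : ∀ i, ∑ j, (P ^ n) i j = 1 := by
  induction n with
  | zero => intro i; simp [Matrix.one_apply]
  | succ n ih =>
    intro i
    simp only [pow_succ, Matrix.mul_apply]
    rw [Finset.sum_comm]
    simp_rw [← Finset.mul_sum, h1]
    simpa using ih i

lemma pow_entry_le_one (h : ∀ i j, 0 ≤ P i j) (h1 : ∀ i, ∑ j, P i j = 1) (n : ℕ)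
    (i j : Fin d) : (P ^ n) i j ≤ 1 := by
  calc (P ^ n) i j ≤ ∑ k, (P ^ n) i k :=
        Finset.single_le_sum (fun k _ => pow_entry_nonneg P h n i k) (Finset.mem_univ j)
    _ = 1 := pow_row_sum P h1 n i

lemma pow_invariant (μ : Fin d → ℝ) (hinv : ∀ j, ∑ i, μ i * P i j = μ j) (n : ℕ) :
    ∀ j, ∑ i, μ i * (P ^ n) i j = μ j := by
  induction n with
  | zero => intro j; simp [Matrix.one_apply]
  | succ n ih =>
    intro j
    simp only [pow_succ, Matrix.mul_apply, Finset.mul_sum]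
    rw [Finset.sum_comm]
    calc ∑ k, ∑ i, μ i * ((P ^ n) i k * P k j)
        = ∑ k, (∑ i, μ i * (P ^ n) i k) * P k j := by
          refine Finset.sum_congr rfl fun k _ => ?_
          rw [Finset.sum_mul]; exact Finset.sum_congr rfl fun i _ => by ring
      _ = ∑ k, μ k * P k j := by simp_rw [ih]
      _ = μ j := hinv j

/-- contraction of a stochastic matrix with invariant measure in the μ-weighted L² sense -/
lemma muSq_mulVec_le (Q : Matrix (Fin d) (Fin d) ℝ) (hQ0 : ∀ i j, 0 ≤ Q i j)
    (hQ1 : ∀ i, ∑ j, Q i j = 1) (μ : Fin d → ℝ) (hμ0 : ∀ i, 0 ≤ μ i)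
    (hinv : ∀ j, ∑ i, μ i * Q i j = μ j) (x : Fin d → ℝ) :
    ∑ i, μ i * (Q.mulVec x i) ^ 2 ≤ ∑ j, μ j * (x j) ^ 2 := by
  have key : ∀ i, (Q.mulVec x i) ^ 2 ≤ ∑ j, Q i j * (x j) ^ 2 := by
    intro i
    have cs := Finset.sum_mul_sq_le_sq_mul_sq Finset.univ
      (fun j => Real.sqrt (Q i j)) (fun j => Real.sqrt (Q i j) * x j)
    have e1 : ∑ j, Real.sqrt (Q i j) * (Real.sqrt (Q i j) * x j) = Q.mulVec x i := by
      rw [Matrix.mulVec, dotProduct]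
      refine Finset.sum_congr rfl fun j _ => ?_
      rw [← mul_assoc, Real.mul_self_sqrt (hQ0 i j)]
    have e2 : ∑ j, (Real.sqrt (Q i j)) ^ 2 = 1 := by
      simp_rw [Real.sq_sqrt (hQ0 i _)]
      exact hQ1 i
    have e3 : ∑ j, (Real.sqrt (Q i j) * x j) ^ 2 = ∑ j, Q i j * (x j) ^ 2 := by
      refine Finset.sum_congr rfl fun j _ => ?_
      rw [mul_pow, Real.sq_sqrt (hQ0 i j)]
    rw [e1, e2, e3, one_mul] at cs
    exact cs
  calc ∑ i, μ i * (Q.mulVec x i) ^ 2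
      ≤ ∑ i, μ i * ∑ j, Q i j * (x j) ^ 2 :=
        Finset.sum_le_sum fun i _ => mul_le_mul_of_nonneg_left (key i) (hμ0 i)
    _ = ∑ j, μ j * (x j) ^ 2 := by
        simp_rw [Finset.mul_sum]
        rw [Finset.sum_comm]
        refine Finset.sum_congr rfl fun j _ => ?_
        calc ∑ i, μ i * (Q i j * (x j) ^ 2) = (∑ i, μ i * Q i j) * (x j) ^ 2 := by
              rw [Finset.sum_mul]; exact Finset.sum_congr rfl fun i _ => by ring
          _ = μ j * (x j) ^ 2 := by rw [hinv j]

lemma muNorm_mulVec_le (Q : Matrix (Fin d) (Fin d) ℝ) (hQ0 : ∀ i j, 0 ≤ Q i j)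
    (hQ1 : ∀ i, ∑ j, Q i j = 1) (μ : Fin d → ℝ) (hμ0 : ∀ i, 0 ≤ μ i)
    (hinv : ∀ j, ∑ i, μ i * Q i j = μ j) (x : Fin d → ℝ) :
    muNorm μ (Q.mulVec x) ≤ muNorm μ x := by
  apply Real.sqrt_le_sqrt
  unfold muInner
  simpa [sq, mul_assoc] using muSq_mulVec_le Q hQ0 hQ1 μ hμ0 hinv x

end stoch

section tsums
variable {d : ℕ}

lemma summable_matrix_of_bound (f : ℕ → Matrix (Fin d) (Fin d) ℝ) (g : ℕ → ℝ)
    (hg : Summable g) (h : ∀ m i j, |f m i j| ≤ g m) : Summable f := by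
  refine Pi.summable.mpr ?_
  intro i
  rw [Pi.summable]
  intro j
  exact Summable.of_norm_bounded hg fun m => by
    simpa [Real.norm_eq_abs] using h m i j

lemma summable_vec_of_bound (f : ℕ → (Fin d → ℝ)) (g : ℕ → ℝ)
    (hg : Summable g) (h : ∀ m i, |f m i| ≤ g m) : Summable f := by
  rw [Pi.summable]
  intro i
  exact Summable.of_norm_bounded hg fun m => by
    simpa [Real.norm_eq_abs] using h m i

/-- `M ↦ M.mulVec v` as a continuous linear map. -/
noncomputable def mulVecCLM (v : Fin d → ℝ) :
    Matrix (Fin d) (Fin d) ℝ →L[ℝ] (Fin d → ℝ) :=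
  LinearMap.toContinuousLinearMap
  { toFun := fun M => M.mulVec v
    map_add' := fun A B => Matrix.add_mulVec A B v
    map_smul' := fun c A => Matrix.smul_mulVec c A v }

@[simp] lemma mulVecCLM_apply (v : Fin d → ℝ) (M : Matrix (Fin d) (Fin d) ℝ) :
    mulVecCLM v M = M.mulVec v := rfl

/-- `v ↦ Q.mulVec v` as a continuous linear map. -/
noncomputable def vecCLM (Q : Matrix (Fin d) (Fin d) ℝ) :
    (Fin d → ℝ) →L[ℝ] (Fin d → ℝ) :=
  LinearMap.toContinuousLinearMap (Matrix.mulVecLin Q)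

@[simp] lemma vecCLM_apply (Q : Matrix (Fin d) (Fin d) ℝ) (v : Fin d → ℝ) :
    vecCLM Q v = Q.mulVec v := rfl

noncomputable def muEmbCLM (μ : Fin d → ℝ) : (Fin d → ℝ) →L[ℝ] EuclideanSpace ℝ (Fin d) :=
  LinearMap.toContinuousLinearMap (muEmb μ)

@[simp] lemma muEmbCLM_apply (μ : Fin d → ℝ) (a : Fin d → ℝ) :
    muEmbCLM μ a = muEmb μ a := rfl

end tsums

section munorm
variable {d : ℕ} (μ : Fin d → ℝ)

lemma muNorm_nonneg (a : Fin d → ℝ) : 0 ≤ muNorm μ a := Real.sqrt_nonneg _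

lemma muNorm_smul (hμ0 : ∀ i, 0 ≤ μ i) (c : ℝ) (a : Fin d → ℝ) : muNorm μ (c • a) = |c| * muNorm μ a := by
  rw [muNorm_eq μ hμ0, muNorm_eq μ hμ0, map_smul, norm_smul, Real.norm_eq_abs]

lemma muNorm_add_le (hμ0 : ∀ i, 0 ≤ μ i) (a b : Fin d → ℝ) : muNorm μ (a + b) ≤ muNorm μ a + muNorm μ b := by
  rw [muNorm_eq μ hμ0, muNorm_eq μ hμ0, muNorm_eq μ hμ0, map_add]
  exact norm_add_le _ _

lemma muNorm_neg (hμ0 : ∀ i, 0 ≤ μ i) (a : Fin d → ℝ) : muNorm μ (-a) = muNorm μ a := by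
  rw [muNorm_eq μ hμ0, muNorm_eq μ hμ0, map_neg, norm_neg]

end munorm

/-- P^λ := (1−λ) Σ_{m=0}^∞ (λγ)^m P^{m+1}. -/
noncomputable def Plam {d : ℕ} (P : Matrix (Fin d) (Fin d) ℝ) (γ lam : ℝ) :
    Matrix (Fin d) (Fin d) ℝ :=
  (1 - lam) • ∑' m : ℕ, (lam * γ) ^ m • P ^ (m + 1)

/-- r̄^λ := (1−λ) Σ_{m=0}^∞ λ^m Σ_{t=0}^m γ^t P^t r̄. -/
noncomputable def rlam {d : ℕ} (P : Matrix (Fin d) (Fin d) ℝ) (γ lam : ℝ)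
    (rbar : Fin d → ℝ) : Fin d → ℝ :=
  (1 - lam) • ∑' m : ℕ, lam ^ m • (∑ t ∈ Finset.range (m + 1), γ ^ t • (P ^ t).mulVec rbar)

/-- The TD operator T^λ V := r̄^λ + γ P^λ V. -/
noncomputable def Tlam {d : ℕ} (P : Matrix (Fin d) (Fin d) ℝ) (γ lam : ℝ)
    (rbar : Fin d → ℝ) (V : Fin d → ℝ) : Fin d → ℝ :=
  rlam P γ lam rbar + γ • (Plam P γ lam).mulVec V

/-- V* := Σ_{t=0}^∞ γ^t P^t r̄. -/
noncomputable def Vstar {d : ℕ} (P : Matrix (Fin d) (Fin d) ℝ) (γ : ℝ)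
    (rbar : Fin d → ℝ) : Fin d → ℝ :=
  ∑' t : ℕ, γ ^ t • (P ^ t).mulVec rbar

/-- For every W ∈ ℝ^d, ‖T^λ W − W‖_μ ≤ 2 ‖W − V*‖_μ, where V* is the fixed point
of T^λ. -/
theorem TD_error_le_two_dist
    {d : ℕ} (hd : 0 < d)
    (P : Matrix (Fin d) (Fin d) ℝ)
    (hP_nonneg : ∀ i j, 0 ≤ P i j)
    (hP_row : ∀ i, ∑ j, P i j = 1)
    (μ : Fin d → ℝ)
    (hμ_pos : ∀ i, 0 < μ i)
    (hμ_sum : ∑ i, μ i = 1)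
    (hμ_inv : ∀ j, ∑ i, μ i * P i j = μ j)
    (γ lam : ℝ) (hγ0 : 0 < γ) (hγ1 : γ < 1) (hlam0 : 0 ≤ lam) (hlam1 : lam < 1)
    (rbar : Fin d → ℝ)
    (W : Fin d → ℝ) :
    muNorm μ (Tlam P γ lam rbar W - W) ≤ 2 * muNorm μ (W - Vstar P γ rbar) := by
  have hμ0 : ∀ i, 0 ≤ μ i := fun i => (hμ_pos i).le
  set q : ℝ := lam * γ with hqdef
  have hq0 : 0 ≤ q := mul_nonneg hlam0 hγ0.le
  have hq1 : q < 1 := by nlinarith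
  have hPn0 := pow_entry_nonneg P hP_nonneg
  have hPn1 := pow_row_sum P hP_row
  have hPnle := pow_entry_le_one P hP_nonneg hP_row
  have hPninv := pow_invariant P μ hμ_inv
  -- entrywise bound for mulVec by stochastic powers
  have hmv : ∀ (n : ℕ) (v : Fin d → ℝ) (i : Fin d),
      |(P ^ n).mulVec v i| ≤ ∑ j, |v j| := by
    intro n v i
    rw [Matrix.mulVec, dotProduct]
    calc |∑ j, (P ^ n) i j * v j| ≤ ∑ j, |(P ^ n) i j * v j| :=
          Finset.abs_sum_le_sum_abs _ _
      _ ≤ ∑ j, |v j| := by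
          refine Finset.sum_le_sum fun j _ => ?_
          rw [abs_mul, abs_of_nonneg (hPn0 n i j)]
          exact mul_le_of_le_one_left (abs_nonneg _) (hPnle n i j)
  -- summabilities
  have hS1 : Summable (fun m : ℕ => q ^ m • P ^ (m + 1)) := by
    refine summable_matrix_of_bound _ (fun m => q ^ m)
      (summable_geometric_of_lt_one hq0 hq1) (fun m i j => ?_)
    have : (q ^ m • P ^ (m + 1)) i j = q ^ m * (P ^ (m + 1)) i j := rfl
    rw [this, abs_mul, abs_of_nonneg (pow_nonneg hq0 m)]
    calc q ^ m * |(P ^ (m + 1)) i j| ≤ q ^ m * 1 := by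
          refine mul_le_mul_of_nonneg_left ?_ (pow_nonneg hq0 m)
          rw [abs_of_nonneg (hPn0 _ i j)]; exact hPnle _ i j
      _ = q ^ m := mul_one _
  have hSvec : ∀ (k : ℕ) (v : Fin d → ℝ),
      Summable (fun t : ℕ => γ ^ t • (P ^ (k + t)).mulVec v) := by
    intro k v
    refine summable_vec_of_bound _ (fun t => γ ^ t * ∑ j, |v j|)
      ((summable_geometric_of_lt_one hγ0.le hγ1).mul_right _) (fun t i => ?_)
    have : (γ ^ t • (P ^ (k + t)).mulVec v) i = γ ^ t * (P ^ (k + t)).mulVec v i := rfl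
    rw [this, abs_mul, abs_of_nonneg (pow_nonneg hγ0.le t)]
    exact mul_le_mul_of_nonneg_left (hmv _ v i) (pow_nonneg hγ0.le t)
  have hSvec0 : ∀ v : Fin d → ℝ, Summable (fun t : ℕ => γ ^ t • (P ^ t).mulVec v) := by
    intro v; simpa using hSvec 0 v
  
  -- the key shift identity
  have hkey : ∀ k : ℕ, γ ^ k • (P ^ k).mulVec (Vstar P γ rbar)
      = Vstar P γ rbar - ∑ t ∈ Finset.range k, γ ^ t • (P ^ t).mulVec rbar := by
    intro k
    have h1 : (P ^ k).mulVec (Vstar P γ rbar)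
        = ∑' t : ℕ, γ ^ t • (P ^ (k + t)).mulVec rbar := by
      calc (P ^ k).mulVec (Vstar P γ rbar)
          = vecCLM (P ^ k) (∑' t : ℕ, γ ^ t • (P ^ t).mulVec rbar) := rfl
        _ = ∑' t : ℕ, vecCLM (P ^ k) (γ ^ t • (P ^ t).mulVec rbar) :=
            (vecCLM (P ^ k)).map_tsum (hSvec0 rbar)
        _ = ∑' t : ℕ, γ ^ t • (P ^ (k + t)).mulVec rbar := by
            refine tsum_congr fun t => ?_
            rw [vecCLM_apply, Matrix.mulVec_smul, Matrix.mulVec_mulVec, ← pow_add]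
    have h2 : γ ^ k • (P ^ k).mulVec (Vstar P γ rbar)
        = ∑' t : ℕ, γ ^ (t + k) • (P ^ (t + k)).mulVec rbar := by
      rw [h1, ← Summable.tsum_const_smul _ (hSvec k rbar)]
      refine tsum_congr fun t => ?_
      rw [smul_smul, ← pow_add, add_comm k t]
    have h3 := Summable.sum_add_tsum_nat_add (f := fun t : ℕ => γ ^ t • (P ^ t).mulVec rbar) k
      (hSvec0 rbar)
    rw [h2]
    have : (∑' t : ℕ, γ ^ (t + k) • (P ^ (t + k)).mulVec rbar)
        = ∑' t : ℕ, (fun s : ℕ => γ ^ s • (P ^ s).mulVec rbar) (t + k) := rfl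
    rw [this]
    rw [show Vstar P γ rbar = ∑' t : ℕ, γ ^ t • (P ^ t).mulVec rbar from rfl, ← h3]
    abel
  
  -- more summabilities
  have hM0 : (0:ℝ) ≤ ∑ j, |rbar j| := Finset.sum_nonneg fun j _ => abs_nonneg _
  have hgeo : ∀ m : ℕ, ∑ t ∈ Finset.range (m + 1), γ ^ t ≤ (1 - γ)⁻¹ := by
    intro m
    have := Summable.sum_le_tsum (Finset.range (m + 1)) (fun t _ => pow_nonneg hγ0.le t)
      (summable_geometric_of_lt_one hγ0.le hγ1)
    rwa [tsum_geometric_of_lt_one hγ0.le hγ1] at this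
  have hSrl : Summable (fun m : ℕ =>
      lam ^ m • (∑ t ∈ Finset.range (m + 1), γ ^ t • (P ^ t).mulVec rbar)) := by
    refine summable_vec_of_bound _ (fun m => lam ^ m * ((1 - γ)⁻¹ * ∑ j, |rbar j|))
      ((summable_geometric_of_lt_one hlam0 hlam1).mul_right _) (fun m i => ?_)
    have h0 : (lam ^ m • (∑ t ∈ Finset.range (m + 1), γ ^ t • (P ^ t).mulVec rbar)) i
        = lam ^ m * (∑ t ∈ Finset.range (m + 1), γ ^ t • (P ^ t).mulVec rbar) i := rfl
    rw [h0, abs_mul, abs_of_nonneg (pow_nonneg hlam0 m)]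
    refine mul_le_mul_of_nonneg_left ?_ (pow_nonneg hlam0 m)
    have h1 : (∑ t ∈ Finset.range (m + 1), γ ^ t • (P ^ t).mulVec rbar) i
        = ∑ t ∈ Finset.range (m + 1), γ ^ t * (P ^ t).mulVec rbar i := by
      simp [Finset.sum_apply]
    rw [h1]
    calc |∑ t ∈ Finset.range (m + 1), γ ^ t * (P ^ t).mulVec rbar i|
        ≤ ∑ t ∈ Finset.range (m + 1), |γ ^ t * (P ^ t).mulVec rbar i| :=
          Finset.abs_sum_le_sum_abs _ _
      _ ≤ ∑ t ∈ Finset.range (m + 1), γ ^ t * ∑ j, |rbar j| := by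
          refine Finset.sum_le_sum fun t _ => ?_
          rw [abs_mul, abs_of_nonneg (pow_nonneg hγ0.le t)]
          exact mul_le_mul_of_nonneg_left (hmv t rbar i) (pow_nonneg hγ0.le t)
      _ = (∑ t ∈ Finset.range (m + 1), γ ^ t) * ∑ j, |rbar j| := by rw [Finset.sum_mul]
      _ ≤ (1 - γ)⁻¹ * ∑ j, |rbar j| := mul_le_mul_of_nonneg_right (hgeo m) hM0
  have hSlamV : Summable (fun m : ℕ => lam ^ m • Vstar P γ rbar) :=
    (summable_geometric_of_lt_one hlam0 hlam1).smul_const _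
  have hSPV : Summable (fun m : ℕ => q ^ m • (P ^ (m + 1)).mulVec (Vstar P γ rbar)) := by
    refine summable_vec_of_bound _ (fun m => q ^ m * ∑ j, |Vstar P γ rbar j|)
      ((summable_geometric_of_lt_one hq0 hq1).mul_right _) (fun m i => ?_)
    have h0 : (q ^ m • (P ^ (m + 1)).mulVec (Vstar P γ rbar)) i
        = q ^ m * (P ^ (m + 1)).mulVec (Vstar P γ rbar) i := rfl
    rw [h0, abs_mul, abs_of_nonneg (pow_nonneg hq0 m)]
    exact mul_le_mul_of_nonneg_left (hmv _ _ i) (pow_nonneg hq0 m)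
  -- fixed point identity
  have hfix : γ • (Plam P γ lam).mulVec (Vstar P γ rbar)
      = Vstar P γ rbar - rlam P γ lam rbar := by
    have e1 : (Plam P γ lam).mulVec (Vstar P γ rbar)
        = (1 - lam) • ∑' m : ℕ, q ^ m • (P ^ (m + 1)).mulVec (Vstar P γ rbar) := by
      rw [Plam, Matrix.smul_mulVec]
      congr 1
      calc (∑' m : ℕ, q ^ m • P ^ (m + 1)).mulVec (Vstar P γ rbar)
          = mulVecCLM (Vstar P γ rbar) (∑' m : ℕ, q ^ m • P ^ (m + 1)) := rfl
        _ = ∑' m : ℕ, mulVecCLM (Vstar P γ rbar) (q ^ m • P ^ (m + 1)) :=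
            (mulVecCLM _).map_tsum hS1
        _ = ∑' m : ℕ, q ^ m • (P ^ (m + 1)).mulVec (Vstar P γ rbar) := by
            refine tsum_congr fun m => ?_
            rw [mulVecCLM_apply, Matrix.smul_mulVec]
    rw [e1, smul_comm γ (1 - lam), ← Summable.tsum_const_smul γ hSPV]
    have e2 : ∀ m : ℕ, γ • q ^ m • (P ^ (m + 1)).mulVec (Vstar P γ rbar)
        = lam ^ m • Vstar P γ rbar
          - lam ^ m • ∑ t ∈ Finset.range (m + 1), γ ^ t • (P ^ t).mulVec rbar := by
      intro m
      rw [← smul_sub, ← hkey (m + 1), smul_smul, smul_smul]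
      congr 1
      rw [hqdef]
      ring
    rw [tsum_congr e2, Summable.tsum_sub hSlamV hSrl,
      Summable.tsum_smul_const (summable_geometric_of_lt_one hlam0 hlam1) _,
      tsum_geometric_of_lt_one hlam0 hlam1, smul_sub, smul_smul,
      mul_inv_cancel₀ (by linarith : (1:ℝ) - lam ≠ 0), one_smul]
    rfl
  
  -- general versions
  have hSPv : ∀ v : Fin d → ℝ,
      Summable (fun m : ℕ => q ^ m • (P ^ (m + 1)).mulVec v) := by
    intro v
    refine summable_vec_of_bound _ (fun m => q ^ m * ∑ j, |v j|)
      ((summable_geometric_of_lt_one hq0 hq1).mul_right _) (fun m i => ?_)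
    have h0 : (q ^ m • (P ^ (m + 1)).mulVec v) i
        = q ^ m * (P ^ (m + 1)).mulVec v i := rfl
    rw [h0, abs_mul, abs_of_nonneg (pow_nonneg hq0 m)]
    exact mul_le_mul_of_nonneg_left (hmv _ _ i) (pow_nonneg hq0 m)
  have ePlam : ∀ v : Fin d → ℝ, (Plam P γ lam).mulVec v
      = (1 - lam) • ∑' m : ℕ, q ^ m • (P ^ (m + 1)).mulVec v := by
    intro v
    rw [Plam, Matrix.smul_mulVec]
    congr 1
    calc (∑' m : ℕ, q ^ m • P ^ (m + 1)).mulVec v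
        = mulVecCLM v (∑' m : ℕ, q ^ m • P ^ (m + 1)) := rfl
      _ = ∑' m : ℕ, mulVecCLM v (q ^ m • P ^ (m + 1)) := (mulVecCLM _).map_tsum hS1
      _ = ∑' m : ℕ, q ^ m • (P ^ (m + 1)).mulVec v := by
          refine tsum_congr fun m => ?_
          rw [mulVecCLM_apply, Matrix.smul_mulVec]
  set x : Fin d → ℝ := W - Vstar P γ rbar with hx
  -- decomposition
  have hdec : Tlam P γ lam rbar W - W
      = γ • (Plam P γ lam).mulVec x + (Vstar P γ rbar - W) := by
    rw [hx, Matrix.mulVec_sub, smul_sub, hfix, Tlam]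
    abel
  -- termwise norm bound
  have hterm : ∀ m : ℕ, ‖muEmb μ (q ^ m • (P ^ (m + 1)).mulVec x)‖ ≤ q ^ m * muNorm μ x := by
    intro m
    rw [← muNorm_eq μ hμ0, muNorm_smul μ hμ0, abs_of_nonneg (pow_nonneg hq0 m)]
    exact mul_le_mul_of_nonneg_left
      (muNorm_mulVec_le (P ^ (m + 1)) (hPn0 _) (hPn1 _) μ hμ0 (hPninv _) x)
      (pow_nonneg hq0 m)
  have hnormS : Summable (fun m : ℕ => ‖muEmb μ (q ^ m • (P ^ (m + 1)).mulVec x)‖) :=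
    Summable.of_nonneg_of_le (fun m => norm_nonneg _) hterm
      ((summable_geometric_of_lt_one hq0 hq1).mul_right _)
  have h4 : muNorm μ (∑' m : ℕ, q ^ m • (P ^ (m + 1)).mulVec x)
      ≤ (1 - q)⁻¹ * muNorm μ x := by
    rw [muNorm_eq μ hμ0]
    calc ‖muEmb μ (∑' m : ℕ, q ^ m • (P ^ (m + 1)).mulVec x)‖
        = ‖∑' m : ℕ, muEmbCLM μ (q ^ m • (P ^ (m + 1)).mulVec x)‖ := by
          rw [← muEmbCLM_apply, (muEmbCLM μ).map_tsum (hSPv x)]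
      _ ≤ ∑' m : ℕ, ‖muEmbCLM μ (q ^ m • (P ^ (m + 1)).mulVec x)‖ :=
          norm_tsum_le_tsum_norm hnormS
      _ ≤ ∑' m : ℕ, q ^ m * muNorm μ x :=
          Summable.tsum_le_tsum hterm hnormS ((summable_geometric_of_lt_one hq0 hq1).mul_right _)
      _ = (1 - q)⁻¹ * muNorm μ x := by
          rw [(summable_geometric_of_lt_one hq0 hq1).tsum_mul_right,
            tsum_geometric_of_lt_one hq0 hq1]
  have hcontr : muNorm μ (γ • (Plam P γ lam).mulVec x) ≤ muNorm μ x := by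
    rw [ePlam x, muNorm_smul μ hμ0, muNorm_smul μ hμ0,
      abs_of_nonneg hγ0.le, abs_of_nonneg (by linarith : (0:ℝ) ≤ 1 - lam)]
    calc γ * ((1 - lam) * muNorm μ (∑' m : ℕ, q ^ m • (P ^ (m + 1)).mulVec x))
        ≤ γ * ((1 - lam) * ((1 - q)⁻¹ * muNorm μ x)) := by
          refine mul_le_mul_of_nonneg_left
            (mul_le_mul_of_nonneg_left h4 (by linarith)) hγ0.le
      _ = (γ * (1 - lam) * (1 - q)⁻¹) * muNorm μ x := by ring
      _ ≤ 1 * muNorm μ x := by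
          refine mul_le_mul_of_nonneg_right ?_ (muNorm_nonneg μ x)
          rw [← div_eq_mul_inv]
          rw [div_le_one (by linarith : (0:ℝ) < 1 - q)]
          nlinarith
      _ = muNorm μ x := one_mul _
  have hVW : muNorm μ (Vstar P γ rbar - W) = muNorm μ x := by
    have : Vstar P γ rbar - W = -x := by rw [hx]; abel
    rw [this, muNorm_neg μ hμ0]
  calc muNorm μ (Tlam P γ lam rbar W - W)
      = muNorm μ (γ • (Plam P γ lam).mulVec x + (Vstar P γ rbar - W)) := by rw [hdec]
    _ ≤ muNorm μ (γ • (Plam P γ lam).mulVec x) + muNorm μ (Vstar P γ rbar - W) :=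
        muNorm_add_le μ hμ0 _ _
    _ ≤ muNorm μ x + muNorm μ x := add_le_add hcontr (le_of_eq hVW)
    _ = 2 * muNorm μ (W - Vstar P γ rbar) := by rw [hx]; ring
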